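/- arXiv:2305.14978 — 2 statements merged into one kernel-verified Lean document; each statement's English description precedes it below -/
import Mathlib

section
/- With Q(h) and H = [-L, I] as for the once-integrated Ornstein–Uhlenbeck process with rate L, the innovation matrix satisfies H Q(h) Hᵀ = h I_d. -/
/-!
The observation matrix `H = [-L, I]` annihilates the drift `A = [[0, I], [0, L]]`, so every term
of the exponential series of `τA` beyond the first is killed by `H`: `H exp(τA) = H`, and
transposing, `exp(τAᵀ) Hᵀ = Hᵀ`. Since moreover `H B = I`, the integrand of `H Q(h) Hᵀ` is
identically `I`, and its integral over `[0, h]` is `h I`.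
-/

open MeasureTheory Matrix
attribute [local instance] Matrix.frobeniusNormedAddCommGroup Matrix.frobeniusNormedSpace

/-- The process noise covariance Q(h) = ∫₀^h exp(Aτ) B Bᵀ exp(Aᵀτ) dτ of the
once-integrated Ornstein–Uhlenbeck process, with A = [[0,I],[0,L]] and B = [0; I]. -/
noncomputable def Qioup {d : ℕ} (L : Matrix (Fin d) (Fin d) ℝ) (h : ℝ) :
    Matrix (Fin d ⊕ Fin d) (Fin d ⊕ Fin d) ℝ :=
  ∫ τ in (0:ℝ)..h,
    NormedSpace.exp (τ • Matrix.fromBlocks (0 : Matrix (Fin d) (Fin d) ℝ) 1 0 L) *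
      Matrix.fromRows (0 : Matrix (Fin d) (Fin d) ℝ) (1 : Matrix (Fin d) (Fin d) ℝ) *
      (Matrix.fromRows (0 : Matrix (Fin d) (Fin d) ℝ) (1 : Matrix (Fin d) (Fin d) ℝ))ᵀ *
      NormedSpace.exp (τ • (Matrix.fromBlocks (0 : Matrix (Fin d) (Fin d) ℝ) 1 0 L)ᵀ)

open scoped Nat
attribute [local instance] Matrix.frobeniusNormedRing Matrix.frobeniusNormedAlgebra

namespace Matrix

variable {m n p q : Type*} [Fintype n]

theorem mul_intervalIntegral_mul [Fintype m] [Fintype p] [Fintype q] (X : Matrix m n ℝ)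
    (Y : Matrix p q ℝ) {f : ℝ → Matrix n p ℝ} (hf : Continuous f) (a b : ℝ) :
    X * (∫ τ in a..b, f τ) * Y = ∫ τ in a..b, X * f τ * Y :=
  let Φ := ((mulRightLinearMap m ℝ Y).comp (mulLeftLinearMap p ℝ X)).toContinuousLinearMap
  (Φ.intervalIntegral_comp_comm (hf.intervalIntegrable a b)).symm

theorem mul_exp_eq_self_of_mul_eq_zero [DecidableEq n] {X : Matrix m n ℝ} {A : Matrix n n ℝ}
    (h : X * A = 0) : X * NormedSpace.exp A = X := by
  have hterm : ∀ k ≠ 0, X * ((k ! : ℝ)⁻¹ • A ^ k) = 0 := fun k hk => by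
    obtain ⟨k, rfl⟩ := Nat.exists_eq_succ_of_ne_zero hk
    rw [pow_succ', Matrix.mul_smul, ← Matrix.mul_assoc, h, Matrix.zero_mul, smul_zero]
  -- The ascription trades the Frobenius ring structure used by the series for the default one.
  have hsum : HasSum (fun k => X * ((k ! : ℝ)⁻¹ • A ^ k)) (X * NormedSpace.exp A) :=
    (mulLeftLinearMap n ℝ X).toContinuousLinearMap.hasSum
      (NormedSpace.exp_series_hasSum_exp' (𝕂 := ℝ) A)
  simpa using hsum.unique (hasSum_single 0 hterm)

variable [DecidableEq n] (L : Matrix n n ℝ)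

theorem fromCols_neg_one_mul_fromBlocks_zero_one_zero :
    fromCols (-L) (1 : Matrix n n ℝ) * fromBlocks (0 : Matrix n n ℝ) 1 0 L = 0 := by
  ext i (j | j) <;> simp [fromCols_mul_fromBlocks]

theorem fromCols_neg_one_mul_fromRows_zero_one :
    fromCols (-L) (1 : Matrix n n ℝ) * fromRows (0 : Matrix n n ℝ) (1 : Matrix n n ℝ) = 1 := by
  simp [fromCols_mul_fromRows]

theorem fromCols_neg_one_mul_exp_smul_fromBlocks_zero_one_zero (τ : ℝ) :
    fromCols (-L) (1 : Matrix n n ℝ) * NormedSpace.exp (τ • fromBlocks (0 : Matrix n n ℝ) 1 0 L) =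
      fromCols (-L) 1 := by
  apply mul_exp_eq_self_of_mul_eq_zero
  rw [Matrix.mul_smul, fromCols_neg_one_mul_fromBlocks_zero_one_zero, smul_zero]

theorem exp_smul_transpose_fromBlocks_zero_one_zero_mul_transpose_fromCols_neg_one (τ : ℝ) :
    NormedSpace.exp (τ • (fromBlocks (0 : Matrix n n ℝ) 1 0 L)ᵀ) *
      (fromCols (-L) (1 : Matrix n n ℝ))ᵀ = (fromCols (-L) 1)ᵀ := by
  rw [← transpose_smul, exp_transpose, ← transpose_mul,
    fromCols_neg_one_mul_exp_smul_fromBlocks_zero_one_zero]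

theorem fromCols_neg_one_conj_exp_fromRows_zero_one_eq_one (τ : ℝ) :
    fromCols (-L) (1 : Matrix n n ℝ) *
        (NormedSpace.exp (τ • fromBlocks (0 : Matrix n n ℝ) 1 0 L) *
          fromRows (0 : Matrix n n ℝ) (1 : Matrix n n ℝ) *
          (fromRows (0 : Matrix n n ℝ) (1 : Matrix n n ℝ))ᵀ *
          NormedSpace.exp (τ • (fromBlocks (0 : Matrix n n ℝ) 1 0 L)ᵀ)) *
        (fromCols (-L) (1 : Matrix n n ℝ))ᵀ = 1 := by
  simp only [← Matrix.mul_assoc]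
  rw [fromCols_neg_one_mul_exp_smul_fromBlocks_zero_one_zero,
    fromCols_neg_one_mul_fromRows_zero_one, Matrix.one_mul, Matrix.mul_assoc,
    exp_smul_transpose_fromBlocks_zero_one_zero_mul_transpose_fromCols_neg_one, ← transpose_mul,
    fromCols_neg_one_mul_fromRows_zero_one, transpose_one]

end Matrix

theorem H_Q_Ht_general {d : ℕ} (L : Matrix (Fin d) (Fin d) ℝ) (h : ℝ) :
    Matrix.fromCols (-L) (1 : Matrix (Fin d) (Fin d) ℝ) * Qioup L h * (Matrix.fromCols (-L) (1 : Matrix (Fin d) (Fin d) ℝ))ᵀ =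
      h • (1 : Matrix (Fin d) (Fin d) ℝ) := by
  rw [Qioup, mul_intervalIntegral_mul _ _ (by fun_prop)]
  simp_rw [fromCols_neg_one_conj_exp_fromRows_zero_one_eq_one]
  rw [intervalIntegral.integral_const, sub_zero]

/-- The innovation matrix satisfies H Q(h) Hᵀ = h I for H = [-L, I]. -/
theorem H_Q_Ht {d : ℕ} (L : Matrix (Fin d) (Fin d) ℝ) (h : ℝ) (hh : 0 < h) :
    Matrix.fromCols (-L) (1 : Matrix (Fin d) (Fin d) ℝ) * Qioup L h * (Matrix.fromCols (-L) (1 : Matrix (Fin d) (Fin d) ℝ))ᵀ =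
      h • (1 : Matrix (Fin d) (Fin d) ℝ) :=
  H_Q_Ht_general L h
end

section
/- Let Σ = [I; L] S [I, Lᵀ] for some symmetric S ∈ ℝ^{d×d}, let Φ(h) = [[I, hφ₁(Lh)],[0, exp(Lh)]], Q(h) the IOUP process noise covariance, and H = [-L, I]. Then the prediction covariance Σ⁻ = Φ(h) Σ Φ(h)ᵀ + Q(h) satisfies Σ⁻ Hᵀ = Q(h) Hᵀ. -/
open MeasureTheory Matrix
attribute [local instance] Matrix.frobeniusNormedAddCommGroup Matrix.frobeniusNormedSpace

/-- The φ-functions of exponential integrators for square matrices: φ₀ = exp, and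
φ_k(M) = ∫₀¹ exp(M(1-τ)) τ^{k-1}/(k-1)! dτ for k ≥ 1. -/
noncomputable def phiM {d : ℕ} (k : ℕ) (M : Matrix (Fin d) (Fin d) ℝ) : Matrix (Fin d) (Fin d) ℝ :=
  if k = 0 then NormedSpace.exp M
  else ∫ τ in (0:ℝ)..1, (τ ^ (k - 1) / (Nat.factorial (k - 1) : ℝ)) • NormedSpace.exp ((1 - τ) • M)

/-! With R = [I; L] we have Σ = R S Rᵀ, so Φ Σ Φᵀ Hᵀ = Φ R S (H Φ R)ᵀ and it suffices that
H Φ(h) R = 0. Blockwise, H Φ(h) R = -L - L (h φ₁(hL)) L + exp(hL) L, which vanishes because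
h φ₁(hL) L = exp(hL) - I (integrate d/dτ exp(τhL)) and L commutes with exp(hL). -/

section phi
attribute [local instance] Matrix.frobeniusNormedRing Matrix.frobeniusNormedAlgebra
variable {d : ℕ}

theorem phiM_one (M : Matrix (Fin d) (Fin d) ℝ) :
    phiM 1 M = ∫ τ in (0:ℝ)..1, NormedSpace.exp (τ • M) := by
  have hflip := intervalIntegral.integral_comp_sub_left (a := 0) (b := 1)
    (fun τ : ℝ ↦ NormedSpace.exp (τ • M)) 1
  simp only [sub_zero, sub_self] at hflip
  simpa [phiM] using hflip

theorem phiM_one_mul_self (M : Matrix (Fin d) (Fin d) ℝ) :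
    phiM 1 M * M = NormedSpace.exp M - 1 := by
  have hcont : Continuous fun τ : ℝ ↦ NormedSpace.exp (τ • M) := by fun_prop
  have hFTC := intervalIntegral.integral_eq_sub_of_hasDerivAt
      (fun τ _ ↦ hasDerivAt_exp_smul_const M τ) ((hcont.mul continuous_const).intervalIntegrable 0 1)
  have hpull := ((ContinuousLinearMap.mul ℝ (Matrix (Fin d) (Fin d) ℝ)).flip M
    ).intervalIntegral_comp_comm (hcont.intervalIntegrable (μ := volume) 0 1)
  simp only [one_smul, zero_smul, NormedSpace.exp_zero] at hFTC
  simp only [ContinuousLinearMap.flip_apply, ContinuousLinearMap.mul_apply'] at hpull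
  rw [phiM_one, ← hpull]
  -- not `rw`: the two integrals are taken w.r.t. different, only defeq, normed-group instances
  exact hFTC

theorem smul_phiM_one_smul_mul (h : ℝ) (L : Matrix (Fin d) (Fin d) ℝ) :
    h • phiM 1 (h • L) * L = NormedSpace.exp (h • L) - 1 := by
  rw [smul_mul_assoc, ← mul_smul_comm, phiM_one_mul_self]

end phi

theorem fromCols_neg_one_mul_fromBlocks_mul_fromRows_one {n α : Type*} [Fintype n]
    [DecidableEq n] [Ring α] {L F E : Matrix n n α} (hF : F * L = E - 1) (hE : Commute L E) :
    Matrix.fromCols (-L) (1 : Matrix n n α) * Matrix.fromBlocks (1 : Matrix n n α) F 0 E *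
      Matrix.fromRows (1 : Matrix n n α) L = 0 := by
  rw [Matrix.fromCols_mul_fromBlocks, Matrix.fromCols_mul_fromRows]
  simp only [Matrix.mul_one, Matrix.one_mul, Matrix.mul_zero, add_zero]
  simp only [Matrix.add_mul, Matrix.neg_mul, Matrix.mul_assoc, hF, Matrix.mul_sub, Matrix.mul_one,
    hE.eq]
  abel

theorem add_mul_transpose_eq_of_mul_mul_eq_zero {m n α : Type*} [Fintype m] [Fintype n]
    [CommSemiring α] (Φ Q : Matrix m m α) (R : Matrix m n α) (H : Matrix n m α)
    (S : Matrix n n α) (hHΦR : H * Φ * R = 0) :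
    (Φ * (R * S * Rᵀ) * Φᵀ + Q) * Hᵀ = Q * Hᵀ := by
  have hRΦH : Rᵀ * (Φᵀ * Hᵀ) = 0 := by
    simpa [Matrix.transpose_mul, Matrix.mul_assoc] using congrArg transpose hHΦR
  simp only [Matrix.add_mul, Matrix.mul_assoc, hRΦH, Matrix.mul_zero, zero_add]

theorem pred_cov_mul_Ht_general {d : ℕ} (L S : Matrix (Fin d) (Fin d) ℝ)
    (h : ℝ) :
    (Matrix.fromBlocks 1 (h • phiM 1 (h • L)) 0 (NormedSpace.exp (h • L)) *
        (Matrix.fromRows (1 : Matrix (Fin d) (Fin d) ℝ) L * S *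
          (Matrix.fromRows (1 : Matrix (Fin d) (Fin d) ℝ) L)ᵀ) *
        (Matrix.fromBlocks 1 (h • phiM 1 (h • L)) 0 (NormedSpace.exp (h • L)))ᵀ +
        Qioup L h) * (Matrix.fromCols (-L) (1 : Matrix (Fin d) (Fin d) ℝ))ᵀ =
      Qioup L h * (Matrix.fromCols (-L) (1 : Matrix (Fin d) (Fin d) ℝ))ᵀ :=
  add_mul_transpose_eq_of_mul_mul_eq_zero _ _ _ _ S <|
    fromCols_neg_one_mul_fromBlocks_mul_fromRows_one (smul_phiM_one_smul_mul h L)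
      ((Commute.refl L).smul_right h).exp_right

/-- If the filtering covariance has the structure Σ = [I; L] S [I, Lᵀ], then the prediction
covariance Σ⁻ = Φ(h) Σ Φ(h)ᵀ + Q(h) satisfies Σ⁻ Hᵀ = Q(h) Hᵀ, with H = [-L, I] and
Φ(h) = [[I, hφ₁(Lh)],[0, exp(Lh)]]. -/
theorem pred_cov_mul_Ht {d : ℕ} (L S : Matrix (Fin d) (Fin d) ℝ) (hS : S.IsSymm)
    (h : ℝ) (hh : 0 < h) :
    (Matrix.fromBlocks 1 (h • phiM 1 (h • L)) 0 (NormedSpace.exp (h • L)) *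
        (Matrix.fromRows (1 : Matrix (Fin d) (Fin d) ℝ) L * S *
          (Matrix.fromRows (1 : Matrix (Fin d) (Fin d) ℝ) L)ᵀ) *
        (Matrix.fromBlocks 1 (h • phiM 1 (h • L)) 0 (NormedSpace.exp (h • L)))ᵀ +
        Qioup L h) * (Matrix.fromCols (-L) (1 : Matrix (Fin d) (Fin d) ℝ))ᵀ =
      Qioup L h * (Matrix.fromCols (-L) (1 : Matrix (Fin d) (Fin d) ℝ))ᵀ :=
  pred_cov_mul_Ht_general L S h
end
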